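/- arXiv:1912.11864 — 2 statements merged into one kernel-verified Lean document; each statement's English description precedes it below -/
import Mathlib

section
/- Let k ≥ 1 and let φ be a nondegenerate monotone Boolean function on V = {0,...,k}. Then for every real number t: Σ_{ν ∈ sat(φ)} t^{|ν|}·(1−t)^{(k+1)−|ν|} = Σ_{x ∈ L_CNF^φ} μ_CNF(x, 1̂)·(1−t)^{|x|} = 1 − Σ_{x ∈ L_DNF^φ} μ_DNF(x, 1̂)·t^{|x|}. (The left-hand side is the probability Pr(φ, π_t) of φ under the assignment giving each variable independent probability t.) -/
open scoped Classical

/-- Flip the membership of variable `l` in valuation `ν`. -/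
def flipV {k : ℕ} (ν : Finset (Fin (k + 1))) (l : Fin (k + 1)) : Finset (Fin (k + 1)) :=
  if l ∈ ν then ν.erase l else insert l ν

/-- The set of satisfying valuations of a Boolean function on `V = {0,...,k}`. -/
def satSet {k : ℕ} (φ : Finset (Fin (k + 1)) → Bool) : Finset (Finset (Fin (k + 1))) :=
  Finset.univ.filter (fun ν => φ ν = true)

/-- The Euler characteristic of a Boolean function: `Σ_{ν ⊨ φ} (-1)^{|ν|}`. -/
def eul {k : ℕ} (φ : Finset (Fin (k + 1)) → Bool) : ℤ :=
  ∑ ν ∈ satSet φ, (-1 : ℤ) ^ ν.card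

/-- A Boolean function is monotone if enlarging a satisfying valuation keeps it satisfying. -/
def MonotoneBF {k : ℕ} (φ : Finset (Fin (k + 1)) → Bool) : Prop :=
  ∀ ν ν' : Finset (Fin (k + 1)), ν ⊆ ν' → φ ν = true → φ ν' = true

/-- A Boolean function is nondegenerate if it depends on every variable of `V`. -/
def Nondegenerate (k : ℕ) (φ : Finset (Fin (k + 1)) → Bool) : Prop :=
  ∀ l : Fin (k + 1), ∃ ν, φ ν ≠ φ (flipV ν l)

/-- `C` is an implicate of `φ`: every satisfying valuation of `φ` intersects `C`. -/
def IsImplicate {k : ℕ} (φ : Finset (Fin (k + 1)) → Bool) (C : Finset (Fin (k + 1))) : Prop :=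
  ∀ ν, φ ν = true → (ν ∩ C).Nonempty

/-- `C` is a prime implicate of `φ`: a minimal implicate. For a nondegenerate monotone
function these are the clauses `C_0, ..., C_n` of its unique minimized CNF. -/
def IsPrimeImplicate {k : ℕ} (φ : Finset (Fin (k + 1)) → Bool)
    (C : Finset (Fin (k + 1))) : Prop :=
  IsImplicate φ C ∧ ∀ C', C' ⊂ C → ¬ IsImplicate φ C'

/-- `C` is a prime implicant of `φ`: a minimal satisfying valuation. For a nondegenerate
monotone function these are the clauses of its unique minimized DNF. -/
def IsPrimeImplicant {k : ℕ} (φ : Finset (Fin (k + 1)) → Bool)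
    (C : Finset (Fin (k + 1))) : Prop :=
  φ C = true ∧ ∀ C', C' ⊂ C → φ C' = false

/-- The elements of the CNF lattice `L_CNF^φ`: the unions `d_s = ⋃_{i ∈ s} C_i` of sets of
prime implicates of `φ`, ordered by reverse set inclusion. Its greatest element `1̂` is `∅`. -/
noncomputable def cnfLattice {k : ℕ} (φ : Finset (Fin (k + 1)) → Bool) :
    Finset (Finset (Fin (k + 1))) :=
  Finset.univ.filter (fun d => ∃ S : Finset (Finset (Fin (k + 1))),
    (∀ C ∈ S, IsPrimeImplicate φ C) ∧ d = S.sup id)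

/-- The elements of the DNF lattice `L_DNF^φ`: the unions of sets of prime implicants of `φ`,
ordered by reverse set inclusion. Its greatest element `1̂` is `∅`. -/
noncomputable def dnfLattice {k : ℕ} (φ : Finset (Fin (k + 1)) → Bool) :
    Finset (Finset (Fin (k + 1))) :=
  Finset.univ.filter (fun d => ∃ S : Finset (Finset (Fin (k + 1))),
    (∀ C ∈ S, IsPrimeImplicant φ C) ∧ d = S.sup id)

/-- The Möbius function of the poset whose elements are the members of `L`, ordered by
reverse set inclusion: `mobiusRev L v u = μ(u, v)` for `u ≤ v` (i.e. `v ⊆ u`), defined by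
`μ(u,u) = 1` and `μ(u,v) = -∑_{u < w ≤ v} μ(w,v)`, the sum ranging over the elements `w`
of `L` with `u < w ≤ v` (i.e. `v ⊆ w ⊊ u`). -/
noncomputable def mobiusRev {k : ℕ} (L : Finset (Finset (Fin (k + 1))))
    (v : Finset (Fin (k + 1))) (u : Finset (Fin (k + 1))) : ℤ :=
  if u = v then 1
  else - ∑ w ∈ (L.filter (fun w => v ⊆ w ∧ w ⊂ u)).attach, mobiusRev L v w.1
termination_by u.card
decreasing_by
  have hw := w.2
  simp only [Finset.mem_filter] at hw
  exact Finset.card_lt_card hw.2.2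

/-!
Both identities are inclusion–exclusion in disguise. For a family `A` of nonempty sets, the
crosscut theorem for the lattice `L` of unions of subfamilies of `A` gives
`μ(x, 1̂) = ∑_{s ⊆ A, ⋃ s = x} (-1)^|s|`, hence
`∑_{x ∈ L} μ(x, 1̂) t^|x| = ∑_{s ⊆ A} (-1)^|s| t^|⋃ s|`.
As `t^|x|` is the probability that a random valuation (each variable true with probability `t`)
contains `x`, this is the probability that the random valuation contains no member of `A`.
For the prime implicants that is `1 - Pr(φ)`. A valuation satisfies a monotone `φ` iff it meets
every prime implicate, i.e. iff its complement contains none; complementing swaps `t` and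
`1 - t`, which gives the CNF identity.
-/

open Finset

section BernoulliWeight

variable {α R : Type*} [Fintype α] [DecidableEq α] [CommRing R]

def bernoulliWeight (t : R) (ν : Finset α) : R :=
  t ^ #ν * (1 - t) ^ (Fintype.card α - #ν)

lemma bernoulliWeight_compl (t : R) (ν : Finset α) :
    bernoulliWeight t νᶜ = bernoulliWeight (1 - t) ν := by
  rw [bernoulliWeight, bernoulliWeight, card_compl, Nat.sub_sub_self (card_le_univ ν),
    sub_sub_cancel, mul_comm]

lemma sum_bernoulliWeight_superset (t : R) (x : Finset α) :
    ∑ ν with x ⊆ ν, bernoulliWeight t ν = t ^ #x := by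
  have hdisj : ∀ s ∈ (univ \ x).powerset, Disjoint x s := fun s hs =>
    disjoint_of_subset_right (mem_powerset.1 hs) disjoint_sdiff
  have hsupersets :
      ({ν | x ⊆ ν} : Finset (Finset α)) = (univ \ x).powerset.image (x ∪ ·) := by
    rw [← Icc_eq_image_powerset (subset_univ x)]
    ext
    simp
  rw [hsupersets, sum_image fun s hs s' hs' h => by
    rw [← union_sdiff_cancel_left (hdisj s hs), ← union_sdiff_cancel_left (hdisj s' hs'),
      h]]
  calc ∑ s ∈ (univ \ x).powerset, bernoulliWeight t (x ∪ s)
      = ∑ s ∈ (univ \ x).powerset, t ^ #x * (t ^ #s * (1 - t) ^ (#(univ \ x) - #s)) := by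
        refine sum_congr rfl fun s hs => ?_
        rw [bernoulliWeight, card_union_of_disjoint (hdisj s hs),
          card_sdiff_of_subset (subset_univ x), card_univ, pow_add, Nat.sub_add_eq]
        ring
    _ = t ^ #x := by rw [← mul_sum, sum_pow_mul_eq_add_pow, add_sub_cancel, one_pow, mul_one]

lemma sum_bernoulliWeight (t : R) : ∑ ν : Finset α, bernoulliWeight t ν = 1 := by
  simpa using sum_bernoulliWeight_superset t (∅ : Finset α)

lemma powerset_filter_sup_subset (A : Finset (Finset α)) (x : Finset α) :
    {s ∈ A.powerset | s.sup id ⊆ x} = {C ∈ A | C ⊆ x}.powerset := by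
  ext s
  simp only [mem_filter, mem_powerset, Finset.sup_le_iff, id]
  exact ⟨fun ⟨hA, hx⟩ C hC => mem_filter.2 ⟨hA hC, hx C hC⟩,
    fun h => ⟨fun C hC => (mem_filter.1 (h hC)).1, fun C hC => (mem_filter.1 (h hC)).2⟩⟩

lemma sum_powerset_neg_one_pow_mul_pow_card_sup (A : Finset (Finset α)) (t : R) :
    ∑ s ∈ A.powerset, (-1) ^ #s * t ^ #(s.sup id)
      = ∑ ν with ∀ C ∈ A, ¬ C ⊆ ν, bernoulliWeight t ν := by
  calc ∑ s ∈ A.powerset, (-1) ^ #s * t ^ #(s.sup id)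
      = ∑ s ∈ A.powerset, ∑ ν,
          if s.sup id ⊆ ν then (-1) ^ #s * bernoulliWeight t ν else 0 := by
        refine sum_congr rfl fun s _ => ?_
        rw [← sum_bernoulliWeight_superset t (s.sup id), mul_sum, sum_filter]
    _ = ∑ ν, ((∑ s ∈ {C ∈ A | C ⊆ ν}.powerset, (-1 : ℤ) ^ #s : ℤ) : R)
          * bernoulliWeight t ν := by
        rw [sum_comm]
        refine sum_congr rfl fun ν _ => ?_
        rw [← sum_filter, powerset_filter_sup_subset, ← sum_mul]
        push_cast
        rfl
    _ = _ := by
        rw [sum_filter]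
        refine sum_congr rfl fun ν _ => ?_
        simp only [sum_powerset_neg_one_pow_card, filter_eq_empty_iff]
        split_ifs <;> simp

end BernoulliWeight

section BooleanFunction

variable {k : ℕ} {φ : Finset (Fin (k + 1)) → Bool}

lemma isPrimeImplicate_iff_minimal {C : Finset (Fin (k + 1))} :
    IsPrimeImplicate φ C ↔ Minimal (IsImplicate φ) C :=
  minimal_iff_forall_lt.symm

lemma isPrimeImplicant_iff_minimal {C : Finset (Fin (k + 1))} :
    IsPrimeImplicant φ C ↔ Minimal (fun ν => φ ν = true) C := by
  simp only [IsPrimeImplicant, minimal_iff_forall_lt, Bool.not_eq_true]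

lemma IsImplicate.exists_isPrimeImplicate_subset {C : Finset (Fin (k + 1))}
    (hC : IsImplicate φ C) : ∃ C' ⊆ C, IsPrimeImplicate φ C' := by
  simpa only [isPrimeImplicate_iff_minimal] using exists_minimal_le_of_wellFoundedLT _ C hC

lemma exists_isPrimeImplicant_subset {ν : Finset (Fin (k + 1))} (hν : φ ν = true) :
    ∃ C ⊆ ν, IsPrimeImplicant φ C := by
  simpa only [isPrimeImplicant_iff_minimal] using
    exists_minimal_le_of_wellFoundedLT (fun ν => φ ν = true) ν hν

lemma MonotoneBF.eval_compl_iff (hmono : MonotoneBF φ) (ν : Finset (Fin (k + 1))) :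
    φ νᶜ = true ↔ ∀ C, IsPrimeImplicate φ C → ¬ C ⊆ ν := by
  refine ⟨fun hν C hC hCν => ?_, fun h => ?_⟩
  · obtain ⟨a, ha⟩ := hC.1 _ hν
    rw [mem_inter, mem_compl] at ha
    exact ha.1 (hCν ha.2)
  · by_contra hν
    have hImpl : IsImplicate φ ν := fun ν' hν' => by
      by_contra hdisj
      rw [not_nonempty_iff_eq_empty, ← disjoint_iff_inter_eq_empty] at hdisj
      exact hν (hmono ν' νᶜ (subset_compl_iff_disjoint_right.2 hdisj) hν')
    obtain ⟨C, hCν, hC⟩ := hImpl.exists_isPrimeImplicate_subset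
    exact h C hC hCν

lemma MonotoneBF.eval_eq_false_iff (hmono : MonotoneBF φ) (ν : Finset (Fin (k + 1))) :
    φ ν = false ↔ ∀ C, IsPrimeImplicant φ C → ¬ C ⊆ ν := by
  rw [← Bool.not_eq_true, not_iff_comm]
  push Not
  exact ⟨fun ⟨C, hC, hCν⟩ => hmono C ν hCν hC.1,
    fun hν => (exists_isPrimeImplicant_subset hν).imp fun C ⟨hCν, hC⟩ => ⟨hC, hCν⟩⟩

lemma Nondegenerate.exists_eval_eq (hnd : Nondegenerate k φ) (b : Bool) : ∃ ν, φ ν = b := by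
  obtain ⟨ν, hν⟩ := hnd 0
  by_cases h : φ ν = b
  · exact ⟨ν, h⟩
  · exact ⟨flipV ν 0, by cases b <;> simp_all⟩

lemma Nondegenerate.not_isPrimeImplicate_empty (hnd : Nondegenerate k φ) :
    ¬ IsPrimeImplicate φ ∅ := fun h => by
  obtain ⟨ν, hν⟩ := hnd.exists_eval_eq true
  simpa using h.1 ν hν

lemma Nondegenerate.not_isPrimeImplicant_empty (hnd : Nondegenerate k φ)
    (hmono : MonotoneBF φ) : ¬ IsPrimeImplicant φ ∅ := fun h => by
  obtain ⟨ν, hν⟩ := hnd.exists_eval_eq false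
  simp [hmono ∅ ν (empty_subset ν) h.1] at hν

end BooleanFunction

section Crosscut

variable {α : Type*} [DecidableEq α]

def unionsOf (A : Finset (Finset α)) : Finset (Finset α) :=
  A.powerset.image (·.sup id)

lemma filter_exists_sup_eq_unionsOf [Fintype α] (P : Finset α → Prop) :
    univ.filter (fun d => ∃ S : Finset (Finset α), (∀ C ∈ S, P C) ∧ d = S.sup id)
      = unionsOf {C | P C} := by
  ext d
  simp only [unionsOf, mem_filter, mem_univ, true_and, mem_image, mem_powerset, subset_iff,
    eq_comm (a := d)]

lemma eq_sup_filter_subset_of_mem_unionsOf {A : Finset (Finset α)} {x : Finset α}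
    (hx : x ∈ unionsOf A) : x = {C ∈ A | C ⊆ x}.sup id := by
  obtain ⟨S, hSA, rfl⟩ := mem_image.1 hx
  refine le_antisymm (sup_mono fun C hC => mem_filter.2 ⟨mem_powerset.1 hSA hC, ?_⟩) ?_
  · exact le_sup (f := id) hC
  · exact Finset.sup_le fun C hC => (mem_filter.1 hC).2

variable {k : ℕ}

lemma mobiusRev_eq_of_sum_eq {L : Finset (Finset (Fin (k + 1)))} {v : Finset (Fin (k + 1))}
    {f : Finset (Fin (k + 1)) → ℤ}
    (hf : ∀ x ∈ L, v ⊆ x → ∑ w ∈ L with v ⊆ w ∧ w ⊆ x, f w = if x = v then 1 else 0)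
    {x : Finset (Fin (k + 1))} (hx : x ∈ L) (hvx : v ⊆ x) : mobiusRev L v x = f x := by
  induction x using Finset.strongInduction with
  | _ x ih =>
  have hsplit : {w ∈ L | v ⊆ w ∧ w ⊆ x} = insert x {w ∈ L | v ⊆ w ∧ w ⊂ x} := by
    ext w
    simp only [mem_filter, mem_insert]
    constructor
    · rintro ⟨hw, hvw, hwx⟩
      rcases hwx.eq_or_ssubset with rfl | hwx
      exacts [Or.inl rfl, Or.inr ⟨hw, hvw, hwx⟩]
    · rintro (rfl | ⟨hw, hvw, hwx⟩)
      exacts [⟨hx, hvx, subset_rfl⟩, ⟨hw, hvw, hwx.subset⟩]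
  have hsum := hf x hx hvx
  rw [hsplit, sum_insert (by simp)] at hsum
  rw [mobiusRev]
  split_ifs at hsum ⊢ with hxv
  · rw [sum_eq_zero fun w hw => absurd (hxv ▸ (mem_filter.1 hw).2.1)
      (mem_filter.1 hw).2.2.not_subset] at hsum
    omega
  · rw [sum_attach _ (fun w => mobiusRev L v w), sum_congr rfl fun w hw => by
      obtain ⟨hwL, hvw, hwx⟩ := mem_filter.1 hw
      exact ih w hwx hwL hvw]
    exact neg_eq_of_add_eq_zero_left hsum

lemma mobiusRev_unionsOf {A : Finset (Finset (Fin (k + 1)))} (hA : ∅ ∉ A)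
    {x : Finset (Fin (k + 1))} (hx : x ∈ unionsOf A) :
    mobiusRev (unionsOf A) ∅ x = ∑ s ∈ A.powerset with s.sup id = x, (-1) ^ #s := by
  refine mobiusRev_eq_of_sum_eq (f := fun x => ∑ s ∈ A.powerset with s.sup id = x, (-1) ^ #s)
    (fun y hy _ => ?_) hx (empty_subset x)
  have hfibres : {s ∈ A.powerset | s.sup id ∈ {w ∈ unionsOf A | ∅ ⊆ w ∧ w ⊆ y}}
      = {s ∈ A.powerset | s.sup id ⊆ y} :=
    filter_congr fun s hs => by simp [unionsOf, mem_image_of_mem _ hs]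
  rw [sum_fiberwise_eq_sum_filter, hfibres, powerset_filter_sup_subset,
    sum_powerset_neg_one_pow_card]
  refine if_congr ⟨fun h => ?_, ?_⟩ rfl rfl
  · rw [eq_sup_filter_subset_of_mem_unionsOf hy, h, sup_empty, bot_eq_empty]
  · rintro rfl
    exact filter_eq_empty_iff.2 fun C hC hC0 => hA (subset_empty.1 hC0 ▸ hC)

lemma sum_mobiusRev_unionsOf_mul {R : Type*} [CommRing R] {A : Finset (Finset (Fin (k + 1)))}
    (hA : ∅ ∉ A) (g : Finset (Fin (k + 1)) → R) :
    ∑ x ∈ unionsOf A, (mobiusRev (unionsOf A) ∅ x : R) * g x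
      = ∑ s ∈ A.powerset, (-1) ^ #s * g (s.sup id) := by
  rw [← sum_fiberwise_of_maps_to (g := (·.sup id))
    (f := fun s => (-1 : R) ^ #s * g (s.sup id))
    fun s hs => (mem_image_of_mem _ hs : s.sup id ∈ unionsOf A)]
  refine sum_congr rfl fun x hx => ?_
  rw [mobiusRev_unionsOf hA hx, Int.cast_sum, sum_mul]
  refine sum_congr rfl fun s hs => ?_
  rw [(mem_filter.1 hs).2]
  push_cast
  rfl

end Crosscut

theorem stmt1_general (k : ℕ) (φ : Finset (Fin (k + 1)) → Bool)
    (hmono : MonotoneBF φ) (hnd : Nondegenerate k φ) (t : ℝ) :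
    (∑ ν ∈ satSet φ, t ^ ν.card * (1 - t) ^ (k + 1 - ν.card)
        = ∑ x ∈ cnfLattice φ, (mobiusRev (cnfLattice φ) ∅ x : ℝ) * (1 - t) ^ x.card) ∧
    (∑ ν ∈ satSet φ, t ^ ν.card * (1 - t) ^ (k + 1 - ν.card)
        = 1 - ∑ x ∈ dnfLattice φ, (mobiusRev (dnfLattice φ) ∅ x : ℝ) * t ^ x.card) := by
  have hprob : ∑ ν ∈ satSet φ, t ^ ν.card * (1 - t) ^ (k + 1 - ν.card)
      = ∑ ν with φ ν = true, bernoulliWeight t ν := by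
    simp only [satSet, bernoulliWeight, Fintype.card_fin]
  rw [hprob, cnfLattice, dnfLattice, filter_exists_sup_eq_unionsOf, filter_exists_sup_eq_unionsOf,
    sum_mobiusRev_unionsOf_mul (by simpa using hnd.not_isPrimeImplicate_empty),
    sum_mobiusRev_unionsOf_mul (by simpa using hnd.not_isPrimeImplicant_empty hmono),
    sum_powerset_neg_one_pow_mul_pow_card_sup, sum_powerset_neg_one_pow_mul_pow_card_sup]
  constructor
  · calc ∑ ν with φ ν = true, bernoulliWeight t ν
        = ∑ ν with φ νᶜ = true, bernoulliWeight t νᶜ := by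
          rw [sum_filter, sum_filter]
          exact (Equiv.sum_comp (compl_involutive.toPerm _)
            fun ν => if φ ν = true then bernoulliWeight t ν else 0).symm
      _ = _ := by
          refine sum_congr (filter_congr fun ν _ => ?_) fun ν _ => bernoulliWeight_compl t ν
          simp [hmono.eval_compl_iff]
  · have hunsat :
        univ.filter (fun ν => ∀ C ∈ univ.filter (fun C => IsPrimeImplicant φ C), ¬ C ⊆ ν)
          = univ.filter (fun ν => ¬ φ ν = true) := by
      refine filter_congr fun ν _ => ?_
      simp [hmono.eval_eq_false_iff]
    rw [hunsat, eq_sub_iff_add_eq, sum_filter_add_sum_filter_not, sum_bernoulliWeight]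

/-- for a nondegenerate monotone Boolean function `φ` on `V = {0,...,k}`
and any real `t`, the probability `Pr(φ, π_t) = Σ_{ν ⊨ φ} t^{|ν|} (1-t)^{(k+1)-|ν|}`
equals `Σ_{x ∈ L_CNF^φ} μ_CNF(x, 1̂) (1-t)^{|x|}` and equals
`1 - Σ_{x ∈ L_DNF^φ} μ_DNF(x, 1̂) t^{|x|}`. -/
theorem stmt1 (k : ℕ) (hk : 1 ≤ k) (φ : Finset (Fin (k + 1)) → Bool)
    (hmono : MonotoneBF φ) (hnd : Nondegenerate k φ) (t : ℝ) :
    (∑ ν ∈ satSet φ, t ^ ν.card * (1 - t) ^ (k + 1 - ν.card)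
        = ∑ x ∈ cnfLattice φ, (mobiusRev (cnfLattice φ) ∅ x : ℝ) * (1 - t) ^ x.card) ∧
    (∑ ν ∈ satSet φ, t ^ ν.card * (1 - t) ^ (k + 1 - ν.card)
        = 1 - ∑ x ∈ dnfLattice φ, (mobiusRev (dnfLattice φ) ∅ x : ℝ) * t ^ x.card) :=
  stmt1_general k φ hmono hnd t
end

section
/- Let k ≥ 1 and let φ be a Boolean function on V = {0,...,k}. Then φ is fragmentable if and only if eul(φ) = 0. -/
/-!
Flipping a variable on which `φ` does not depend is a sign-reversing involution of `sat(φ)`, so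
degenerate functions have Euler characteristic `0`; moreover `eul` is additive on disjoint
disjunctions and changes sign under negation, because the whole cube has Euler characteristic `0`.

Conversely, a set of valuations with Euler characteristic `0` splits into pairs `{A, B}` with
`|A|` and `|B|` of opposite parity, i.e. with `|A ∆ B|` odd. Such a pair is fragmentable by
induction on `|A ∆ B|`: an edge `{A, A ∆ {l}}` of the cube is degenerate, and for distinct
`l, m ∈ A ∆ B` we have `{A, B} = ({A, A ∆ {l}} ∪ {A ∆ {l, m}, B}) \ {A ∆ {l}, A ∆ {l, m}}`.
-/

open scoped Classical

/-- A Boolean function is degenerate if there is a variable on which it does not depend. -/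
def Degenerate (k : ℕ) (φ : Finset (Fin (k + 1)) → Bool) : Prop :=
  ∃ l : Fin (k + 1), ∀ ν, φ ν = φ (flipV ν l)

/-- Fragmentable Boolean functions: the smallest class of Boolean functions on `V` containing
all degenerate functions and closed under negation and under disjunction of two disjoint
members of the class. -/
inductive Fragmentable (k : ℕ) : (Finset (Fin (k + 1)) → Bool) → Prop
  | degen (φ) (h : Degenerate k φ) : Fragmentable k φ
  | neg (φ) (h : Fragmentable k φ) : Fragmentable k (fun ν => !(φ ν))
  | disj (φ ψ) (hφ : Fragmentable k φ) (hψ : Fragmentable k ψ)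
      (hdisj : ∀ ν, ¬(φ ν = true ∧ ψ ν = true)) :
      Fragmentable k (fun ν => φ ν || ψ ν)

open scoped symmDiff

section Parity

variable {α : Type*} [DecidableEq α]

lemma card_symmDiff_add_two_mul_card_inter (A B : Finset α) :
    (A ∆ B).card + 2 * (A ∩ B).card = A.card + B.card := by
  rw [symmDiff_eq_sup_sdiff_inf, ← Finset.card_union_add_card_inter A B]
  have := Finset.card_sdiff_add_card_eq_card (Finset.inter_subset_union (s := A) (t := B))
  simp only [Finset.sup_eq_union, Finset.inf_eq_inter] at this ⊢
  omega

lemma neg_one_pow_card_symmDiff (A B : Finset α) :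
    (-1 : ℤ) ^ (A ∆ B).card = (-1) ^ A.card * (-1) ^ B.card := by
  rw [← pow_add, ← card_symmDiff_add_two_mul_card_inter, pow_add, pow_mul]
  norm_num

lemma odd_card_symmDiff_iff (A B : Finset α) :
    Odd (A ∆ B).card ↔ (-1 : ℤ) ^ B.card = -(-1) ^ A.card := by
  rw [← neg_one_pow_eq_neg_one_iff_odd (R := ℤ) (by decide), neg_one_pow_card_symmDiff]
  rcases neg_one_pow_eq_or ℤ A.card with h | h <;> rw [h] <;> constructor <;> intro h' <;> linarith

end Parity

section EulerChar

variable {α : Type*}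

def eulerChar (S : Finset (Finset α)) : ℤ := ∑ ν ∈ S, (-1 : ℤ) ^ ν.card

lemma eulerChar_univ [Fintype α] [Nonempty α] :
    eulerChar (Finset.univ : Finset (Finset α)) = 0 := by
  rw [eulerChar, ← Finset.powerset_univ,
    Finset.sum_powerset_neg_one_pow_card_of_nonempty Finset.univ_nonempty]

lemma eulerChar_sdiff [DecidableEq α] {S T : Finset (Finset α)} (h : T ⊆ S) :
    eulerChar (S \ T) = eulerChar S - eulerChar T :=
  Finset.sum_sdiff_eq_sub h

lemma exists_neg_one_pow_card_eq_neg {S : Finset (Finset α)} (hS : eulerChar S = 0)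
    {A : Finset α} (hA : A ∈ S) : ∃ B ∈ S, (-1 : ℤ) ^ B.card = -(-1) ^ A.card := by
  by_contra! h
  have hconst : ∀ B ∈ S, (-1 : ℤ) ^ B.card = (-1) ^ A.card := fun B hB => by
    rcases neg_one_pow_eq_or ℤ A.card with hA' | hA' <;>
      rcases neg_one_pow_eq_or ℤ B.card with hB' | hB' <;> simp_all
  rw [eulerChar, Finset.sum_congr rfl hconst, Finset.sum_const, nsmul_eq_mul] at hS
  rcases mul_eq_zero.1 hS with hcard | hsign
  · exact Finset.card_ne_zero_of_mem hA (by exact_mod_cast hcard)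
  · exact pow_ne_zero _ (by norm_num) hsign

end EulerChar

section Eul

variable {k : ℕ}

lemma eul_eq_eulerChar (φ : Finset (Fin (k + 1)) → Bool) : eul φ = eulerChar (satSet φ) := rfl

lemma flipV_eq_symmDiff (ν : Finset (Fin (k + 1))) (l : Fin (k + 1)) : flipV ν l = ν ∆ {l} := by
  ext a
  by_cases h : l ∈ ν <;> by_cases ha : a = l <;> simp [flipV, h, ha, Finset.mem_symmDiff]

lemma flipV_flipV (ν : Finset (Fin (k + 1))) (l : Fin (k + 1)) : flipV (flipV ν l) l = ν := by
  rw [flipV_eq_symmDiff, flipV_eq_symmDiff, symmDiff_symmDiff_cancel_right]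

lemma neg_one_pow_card_flipV (ν : Finset (Fin (k + 1))) (l : Fin (k + 1)) :
    (-1 : ℤ) ^ (flipV ν l).card = -(-1) ^ ν.card := by
  rw [flipV_eq_symmDiff, neg_one_pow_card_symmDiff, Finset.card_singleton]
  ring

lemma flipV_ne (ν : Finset (Fin (k + 1))) (l : Fin (k + 1)) : flipV ν l ≠ ν := by
  rw [flipV_eq_symmDiff, Ne, symmDiff_eq_left]
  exact Finset.singleton_ne_empty l

lemma Degenerate.eul_eq_zero {φ : Finset (Fin (k + 1)) → Bool} (h : Degenerate k φ) :
    eul φ = 0 := by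
  obtain ⟨l, hl⟩ := h
  refine Finset.sum_involution (fun ν _ => flipV ν l) (fun ν _ => ?_) (fun ν _ _ => flipV_ne ν l)
    (fun ν hν => ?_) (fun ν _ => flipV_flipV ν l)
  · rw [neg_one_pow_card_flipV, add_neg_cancel]
  · simpa [satSet, ← hl] using hν

lemma satSet_not (φ : Finset (Fin (k + 1)) → Bool) :
    satSet (fun ν => !φ ν) = Finset.univ \ satSet φ := by
  ext ν
  simp [satSet]

lemma satSet_or (φ ψ : Finset (Fin (k + 1)) → Bool) :
    satSet (fun ν => φ ν || ψ ν) = satSet φ ∪ satSet ψ := by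
  ext ν
  simp [satSet]

lemma eul_not (φ : Finset (Fin (k + 1)) → Bool) : eul (fun ν => !φ ν) = -eul φ := by
  rw [eul_eq_eulerChar, satSet_not, eulerChar_sdiff (Finset.subset_univ _), eulerChar_univ,
    eul_eq_eulerChar, zero_sub]

lemma eul_or {φ ψ : Finset (Fin (k + 1)) → Bool} (h : ∀ ν, ¬(φ ν = true ∧ ψ ν = true)) :
    eul (fun ν => φ ν || ψ ν) = eul φ + eul ψ := by
  rw [eul_eq_eulerChar, satSet_or, eulerChar, Finset.sum_union]
  · rfl
  · simpa [Finset.disjoint_left, satSet] using h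

lemma Fragmentable.eul_eq_zero {φ : Finset (Fin (k + 1)) → Bool} (h : Fragmentable k φ) :
    eul φ = 0 := by
  induction h with
  | degen φ h => exact h.eul_eq_zero
  | neg φ _ ih => rw [eul_not, ih, neg_zero]
  | disj φ ψ _ _ hdisj ihφ ihψ => rw [eul_or hdisj, ihφ, ihψ, add_zero]

end Eul

def FragmentableSet (k : ℕ) (S : Finset (Finset (Fin (k + 1)))) : Prop :=
  Fragmentable k (fun ν => decide (ν ∈ S))

lemma Fragmentable.of_satSet {k : ℕ} {φ : Finset (Fin (k + 1)) → Bool}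
    (h : FragmentableSet k (satSet φ)) : Fragmentable k φ := by
  simpa [FragmentableSet, satSet] using h

namespace FragmentableSet

variable {k : ℕ} {S T : Finset (Finset (Fin (k + 1)))}

lemma empty : FragmentableSet k ∅ :=
  .degen _ ⟨0, by simp⟩

lemma union (hS : FragmentableSet k S) (hT : FragmentableSet k T) (h : Disjoint S T) :
    FragmentableSet k (S ∪ T) := by
  have := Fragmentable.disj _ _ hS hT (by simpa [Finset.disjoint_left] using h)
  simpa [FragmentableSet] using this

lemma compl (hS : FragmentableSet k S) : FragmentableSet k Sᶜ := by
  simpa [FragmentableSet] using Fragmentable.neg _ hS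

lemma sdiff (hS : FragmentableSet k S) (hT : FragmentableSet k T) (h : T ⊆ S) :
    FragmentableSet k (S \ T) := by
  have hST : (Sᶜ ∪ T)ᶜ = S \ T := by
    ext ν
    simp only [Finset.mem_compl, Finset.mem_union, Finset.mem_sdiff]
    have := @h ν
    tauto
  rw [← hST]
  exact (hS.compl.union hT (disjoint_compl_left_iff.2 h)).compl

lemma pair_symmDiff_singleton (A : Finset (Fin (k + 1))) (l : Fin (k + 1)) :
    FragmentableSet k {A, A ∆ {l}} := by
  refine .degen _ ⟨l, fun ν => ?_⟩
  have hflip : ν ∆ {l} = A ↔ ν = A ∆ {l} := by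
    constructor <;> rintro rfl <;> simp
  simp [flipV_eq_symmDiff, hflip, symmDiff_left_inj, or_comm]

lemma pair_of_chain {a b c d : Finset (Fin (k + 1))} (hab : FragmentableSet k {a, b})
    (hbc : FragmentableSet k {b, c}) (hcd : FragmentableSet k {c, d})
    (ha : a ∉ ({b, c, d} : Finset _)) (hb : b ∉ ({c, d} : Finset _)) (hc : c ≠ d) :
    FragmentableSet k {a, d} := by
  simp only [Finset.mem_insert, Finset.mem_singleton, not_or] at ha hb
  have hunion := hab.union hcd (by simp [*, Ne.symm])
  have heq : ({a, b} ∪ {c, d}) \ {b, c} = ({a, d} : Finset (Finset (Fin (k + 1)))) := by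
    ext ν
    simp only [Finset.mem_sdiff, Finset.mem_union, Finset.mem_insert, Finset.mem_singleton]
    grind
  exact heq ▸ hunion.sdiff hbc (by grind)

lemma pair_symmDiff_of_odd (A : Finset (Fin (k + 1))) {D : Finset (Fin (k + 1))}
    (hD : Odd D.card) : FragmentableSet k {A, A ∆ D} := by
  obtain ⟨j, hj⟩ := hD
  induction j generalizing A D with
  | zero =>
    obtain ⟨l, rfl⟩ := Finset.card_eq_one.1 hj
    exact pair_symmDiff_singleton A l
  | succ j ih =>
    obtain ⟨l, D₁, hl, rfl, hD₁⟩ :=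
      Finset.card_eq_succ.1 (show D.card = 2 * j + 1 + 1 + 1 by omega)
    obtain ⟨m, D', hm, rfl, hD'⟩ := Finset.card_eq_succ.1 hD₁
    have hlm : l ≠ m := fun h => hl (h ▸ Finset.mem_insert_self _ _)
    have hbc : A ∆ {l} ∆ {m} = A ∆ {l, m} := by
      rw [symmDiff_assoc, (Finset.disjoint_singleton.2 hlm).symmDiff_eq_sup, Finset.sup_eq_union,
        ← Finset.insert_eq]
    have hcd : A ∆ {l, m} ∆ D' = A ∆ insert l (insert m D') := by
      have hdisj : Disjoint ({l, m} : Finset (Fin (k + 1))) D' := by simp_all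
      rw [symmDiff_assoc, hdisj.symmDiff_eq_sup, Finset.sup_eq_union, Finset.insert_union,
        ← Finset.insert_eq]
    have hA : ∀ X : Finset (Fin (k + 1)), X.Nonempty → A ≠ A ∆ X :=
      fun X hX e => hX.ne_empty (symmDiff_eq_left.1 e.symm)
    have hne : ∀ X Y : Finset (Fin (k + 1)), X.card ≠ Y.card → A ∆ X ≠ A ∆ Y :=
      fun X Y h e => h (congrArg _ (symmDiff_right_injective A e))
    refine pair_of_chain (pair_symmDiff_singleton A l) (hbc ▸ pair_symmDiff_singleton _ m)
      (hcd ▸ ih _ hD') ?_ ?_ (hne _ _ (by rw [Finset.card_pair hlm, hj]; omega))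
    · simp only [Finset.mem_insert, Finset.mem_singleton, not_or]
      exact ⟨hA _ (by simp), hA _ (by simp), hA _ (by simp)⟩
    · simp only [Finset.mem_insert, Finset.mem_singleton, not_or]
      exact ⟨hne _ _ (by simp [Finset.card_pair hlm]), hne _ _ (by rw [hj]; simp)⟩

lemma of_eulerChar_eq_zero (hS : eulerChar S = 0) : FragmentableSet k S := by
  induction S using Finset.strongInduction with
  | H S ih =>
  rcases S.eq_empty_or_nonempty with rfl | ⟨A, hA⟩
  · exact empty
  obtain ⟨B, hB, hsign⟩ := exists_neg_one_pow_card_eq_neg hS hA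
  have hAB : A ≠ B := by
    rintro rfl
    exact pow_ne_zero _ (by norm_num) (self_eq_neg.1 hsign)
  have hpair : FragmentableSet k {A, B} := by
    simpa using pair_symmDiff_of_odd A ((odd_card_symmDiff_iff A B).2 hsign)
  have hsub : {A, B} ⊆ S := Finset.insert_subset hA (Finset.singleton_subset_iff.2 hB)
  have hrest : FragmentableSet k (S \ {A, B}) := by
    refine ih _ (Finset.sdiff_ssubset hsub (Finset.insert_nonempty _ _)) ?_
    rw [eulerChar_sdiff hsub, hS, eulerChar, Finset.sum_pair hAB, hsign, add_neg_cancel, sub_zero]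
  exact Finset.sdiff_union_of_subset hsub ▸ hrest.union hpair Finset.sdiff_disjoint

end FragmentableSet

theorem stmt4_general (k : ℕ) (φ : Finset (Fin (k + 1)) → Bool) :
    Fragmentable k φ ↔ eul φ = 0 :=
  ⟨Fragmentable.eul_eq_zero, fun h => .of_satSet (.of_eulerChar_eq_zero h)⟩

/-- `φ` is fragmentable if and only if `eul(φ) = 0`. -/
theorem stmt4 (k : ℕ) (hk : 1 ≤ k) (φ : Finset (Fin (k + 1)) → Bool) :
    Fragmentable k φ ↔ eul φ = 0 :=
  stmt4_general k φ
end
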